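/- arXiv:1704.01418 — 2 statements merged into one kernel-verified Lean document; each statement's English description precedes it below -/
import Mathlib

section
/- Let R ⊆ Matₙ(ℝ) be the common zero set of a family of real polynomials in the matrix entries, and let C ⊆ R be a set closed under addition and nonnegative scalar multiplication. If every nonnegative linear combination of elements of C lies in R, then the real linear span of C is contained in R. -/
/-!
Write an element of the span as `∑ aⱼ cⱼ = p - q` with `p = ∑ aⱼ⁺ cⱼ` and `q = ∑ aⱼ⁻ cⱼ`.
Every `p + t q` with `t ≥ 0` is a nonnegative combination of the `cⱼ`, so each defining
polynomial vanishes on the ray `t ↦ p + t q`; restricted to the line it is a one-variable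
polynomial with infinitely many roots, hence zero, and `t = -1` gives `p - q ∈ R`.
-/

theorem MvPolynomial.eval_add_smul_eq_zero_of_infinite {K σ : Type*} [CommRing K] [IsDomain K]
    (g : MvPolynomial σ K) (x y : σ → K) {S : Set K} (hS : S.Infinite)
    (h : ∀ t ∈ S, eval (x + t • y) g = 0) (t : K) : eval (x + t • y) g = 0 := by
  have hline : ∀ t, (aeval (fun s => Polynomial.C (x s) + Polynomial.C (y s) * Polynomial.X) g).eval t =
      eval (x + t • y) g := fun t => by
    rw [← Polynomial.coe_evalRingHom, aeval_def, hom_eval₂]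
    congr 1
    · ext; simp
    · ext; simp [mul_comm (y _)]
  have hzero := Polynomial.eq_zero_of_infinite_isRoot _
    (hS.mono fun t ht => (hline t).trans (h t ht))
  rw [← hline, hzero, Polynomial.eval_zero]

theorem span_subset_variety_general {n : ℕ} {ι : Type*} (f : ι → MvPolynomial (Fin n × Fin n) ℝ)
    (R : Set (Matrix (Fin n) (Fin n) ℝ))
    (hR : R = {A | ∀ i, MvPolynomial.eval (fun ij => A ij.1 ij.2) (f i) = 0})
    (C : Set (Matrix (Fin n) (Fin n) ℝ))
    (hcomb : ∀ (k : ℕ) (c : Fin k → Matrix (Fin n) (Fin n) ℝ) (a : Fin k → ℝ),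
      (∀ i, c i ∈ C) → (∀ i, 0 ≤ a i) → (∑ i, a i • c i) ∈ R) :
    (Submodule.span ℝ C : Set (Matrix (Fin n) (Fin n) ℝ)) ⊆ R := by
  rintro _ hx
  obtain ⟨k, a, c, rfl⟩ := Submodule.mem_span_set'.1 hx
  set p := ∑ j, (a j)⁺ • (c j : Matrix (Fin n) (Fin n) ℝ)
  set q := ∑ j, (a j)⁻ • (c j : Matrix (Fin n) (Fin n) ℝ)
  have hray : ∀ t : ℝ, 0 ≤ t → p + t • q ∈ R := fun t ht => by
    have := hcomb k (fun j => c j) (fun j => (a j)⁺ + t * (a j)⁻) (fun j => (c j).2)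
      (fun j => add_nonneg (posPart_nonneg _) (mul_nonneg ht (negPart_nonneg _)))
    simpa only [add_smul, mul_smul, Finset.sum_add_distrib, ← Finset.smul_sum] using this
  have hdiff : ∑ j, a j • (c j : Matrix (Fin n) (Fin n) ℝ) = p + (-1 : ℝ) • q := by
    simp only [p, q, neg_one_smul, ← sub_eq_add_neg, ← Finset.sum_sub_distrib, ← sub_smul,
      posPart_sub_negPart]
  subst hR
  intro i
  rw [hdiff]
  -- the entry coordinates of `p + t • q` are definitionally those of `p` plus `t •` those of `q`
  exact MvPolynomial.eval_add_smul_eq_zero_of_infinite (f i) _ _ (Set.Ici_infinite 0)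
    (fun t ht => hray t ht i) (-1)

theorem span_subset_variety {n : ℕ} {ι : Type*} (f : ι → MvPolynomial (Fin n × Fin n) ℝ)
    (R : Set (Matrix (Fin n) (Fin n) ℝ))
    (hR : R = {A | ∀ i, MvPolynomial.eval (fun ij => A ij.1 ij.2) (f i) = 0})
    (C : Set (Matrix (Fin n) (Fin n) ℝ))
    (hCR : C ⊆ R)
    (hadd : ∀ A B, A ∈ C → B ∈ C → A + B ∈ C)
    (hsmul : ∀ (A : Matrix (Fin n) (Fin n) ℝ) (α : ℝ), 0 ≤ α → A ∈ C → α • A ∈ C)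
    (hcomb : ∀ (k : ℕ) (c : Fin k → Matrix (Fin n) (Fin n) ℝ) (a : Fin k → ℝ),
      (∀ i, c i ∈ C) → (∀ i, 0 ≤ a i) → (∑ i, a i • c i) ∈ R) :
    (Submodule.span ℝ C : Set (Matrix (Fin n) (Fin n) ℝ)) ⊆ R :=
  span_subset_variety_general f R hR C hcomb
end

section
/- The 8-dimensional space of 4×4 real matrices of the form with off-diagonal entries (rows/columns indexed 1..4): row 1 = (∗, κ₁, α, α), row 2 = (κ₂, ∗, β, β), row 3 = (γ, γ, ∗, κ₃), row 4 = (δ, δ, κ₄, ∗), where the diagonal entries ∗ are chosen so that every column sums to zero and α, β, γ, δ, κ₁, κ₂, κ₃, κ₄ ∈ ℝ, is closed under the matrix commutator [A,B] = AB − BA, and hence is an 8-dimensional real Lie algebra. -/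
/-!
Write u = (0, 0, 1, -1) and v = (1, -1, 0, 0). For a matrix A with zero column sums, i.e.
`1 ᵥ* A = 0`, the two conditions on the first two rows say exactly that u is an eigenvector of A,
and the two conditions on the last two rows that v is one. Both properties survive commutators:
`1 ᵥ* (A * B - B * A) = (1 ᵥ* A) ᵥ* B - (1 ᵥ* B) ᵥ* A = 0`, and a common eigenvector of A and B
is annihilated by `A * B - B * A`. The dimension is read off the parametrisation of the span by
its eight off-diagonal rates.
-/

open Matrix

namespace Matrix

variable {n R : Type*} [Fintype n] [CommRing R]

theorem commutator_mulVec_eq_zero_of_mulVec_eq_smul {A B : Matrix n n R} {u : n → R} {a b : R}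
    (hA : A *ᵥ u = a • u) (hB : B *ᵥ u = b • u) : (A * B - B * A) *ᵥ u = 0 := by
  rw [sub_mulVec, ← mulVec_mulVec, ← mulVec_mulVec, hA, hB, mulVec_smul, mulVec_smul, hA, hB,
    smul_smul, smul_smul, mul_comm, sub_self]

theorem vecMul_commutator_eq_zero {A B : Matrix n n R} {w : n → R}
    (hA : w ᵥ* A = 0) (hB : w ᵥ* B = 0) : w ᵥ* (A * B - B * A) = 0 := by
  rw [vecMul_sub, ← vecMul_vecMul, ← vecMul_vecMul, hA, hB, zero_vecMul, zero_vecMul, sub_self]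

end Matrix

def hkySpan : Submodule ℝ (Matrix (Fin 4) (Fin 4) ℝ) where
  carrier := {A | A 0 2 = A 0 3 ∧ A 1 2 = A 1 3 ∧ A 2 0 = A 2 1 ∧ A 3 0 = A 3 1 ∧
    ∀ j, ∑ i, A i j = 0}
  add_mem' := by
    rintro A B ⟨_, _, _, _, _⟩ ⟨_, _, _, _, _⟩
    simp_all [Finset.sum_add_distrib]
  zero_mem' := by simp
  smul_mem' := by
    rintro c A ⟨_, _, _, _, _⟩
    simp_all [← Finset.mul_sum]

theorem mem_hkySpan_iff_eigen {A : Matrix (Fin 4) (Fin 4) ℝ} :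
    A ∈ hkySpan ↔ 1 ᵥ* A = 0 ∧ (∃ a : ℝ, A *ᵥ ![0, 0, 1, -1] = a • ![0, 0, 1, -1]) ∧
      ∃ b : ℝ, A *ᵥ ![1, -1, 0, 0] = b • ![1, -1, 0, 0] := by
  have hsum : 1 ᵥ* A = 0 ↔ ∀ j, ∑ i, A i j = 0 := by
    simp [funext_iff, vecMul, dotProduct]
  change (_ ∧ _ ∧ _ ∧ _ ∧ _) ↔ _
  rw [hsum]
  constructor
  · rintro ⟨h₁, h₂, h₃, h₄, h⟩
    have hcol : ∀ j, A 0 j + A 1 j + A 2 j + A 3 j = 0 := by simpa only [Fin.sum_univ_four] using h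
    refine ⟨h, ⟨A 2 2 - A 2 3, ?_⟩, A 0 0 - A 0 1, ?_⟩ <;> funext i <;> fin_cases i <;>
      simp [mulVec, dotProduct, Fin.sum_univ_four] <;> linarith [hcol 0, hcol 1, hcol 2, hcol 3]
  · rintro ⟨h, ⟨a, hu⟩, b, hv⟩
    have hu₀ := congrFun hu 0
    have hu₁ := congrFun hu 1
    have hv₂ := congrFun hv 2
    have hv₃ := congrFun hv 3
    simp [mulVec, dotProduct, Fin.sum_univ_four, ← sub_eq_add_neg, sub_eq_zero] at hu₀ hu₁ hv₂ hv₃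
    exact ⟨hu₀, hu₁, hv₂, hv₃, h⟩

theorem commutator_mem_hkySpan {A B : Matrix (Fin 4) (Fin 4) ℝ}
    (hA : A ∈ hkySpan) (hB : B ∈ hkySpan) : A * B - B * A ∈ hkySpan := by
  obtain ⟨hA₁, ⟨_, hAu⟩, _, hAv⟩ := mem_hkySpan_iff_eigen.1 hA
  obtain ⟨hB₁, ⟨_, hBu⟩, _, hBv⟩ := mem_hkySpan_iff_eigen.1 hB
  exact mem_hkySpan_iff_eigen.2 ⟨vecMul_commutator_eq_zero hA₁ hB₁,
    ⟨0, by simpa using commutator_mulVec_eq_zero_of_mulVec_eq_smul hAu hBu⟩,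
    0, by simpa using commutator_mulVec_eq_zero_of_mulVec_eq_smul hAv hBv⟩

/-- `v = (α, β, γ, δ, κ₁, κ₂, κ₃, κ₄)` in the notation of the informal statement. -/
noncomputable def hkyRateMatrix : (Fin 8 → ℝ) →ₗ[ℝ] Matrix (Fin 4) (Fin 4) ℝ where
  toFun v := !![-(v 2 + v 3 + v 5), v 4, v 0, v 0;
                v 5, -(v 2 + v 3 + v 4), v 1, v 1;
                v 2, v 2, -(v 0 + v 1 + v 7), v 6;
                v 3, v 3, v 7, -(v 0 + v 1 + v 6)]
  map_add' v w := by
    ext i j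
    fin_cases i <;> fin_cases j <;> simp <;> ring
  map_smul' c v := by
    ext i j
    fin_cases i <;> fin_cases j <;> simp <;> ring

def hkyRates (A : Matrix (Fin 4) (Fin 4) ℝ) : Fin 8 → ℝ :=
  ![A 0 2, A 1 2, A 2 0, A 3 0, A 0 1, A 1 0, A 2 3, A 3 2]

theorem hkyRates_hkyRateMatrix (v : Fin 8 → ℝ) : hkyRates (hkyRateMatrix v) = v := by
  funext k
  fin_cases k <;> rfl

theorem hkyRateMatrix_hkyRates {A : Matrix (Fin 4) (Fin 4) ℝ} (hA : A ∈ hkySpan) :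
    hkyRateMatrix (hkyRates A) = A := by
  obtain ⟨h₁, h₂, h₃, h₄, h⟩ := hA
  simp only [Fin.sum_univ_four] at h
  ext i j
  fin_cases i <;> fin_cases j <;> simp [hkyRateMatrix, hkyRates] <;> linarith [h 0, h 1, h 2, h 3]

theorem hkyRateMatrix_mem (v : Fin 8 → ℝ) : hkyRateMatrix v ∈ hkySpan := by
  refine ⟨rfl, rfl, rfl, rfl, fun j => ?_⟩
  fin_cases j <;>
    simp only [hkyRateMatrix, LinearMap.coe_mk, AddHom.coe_mk, of_apply, cons_val', cons_val,
      cons_val_zero, cons_val_one, cons_val_fin_one, Fin.sum_univ_four, Fin.zero_eta, Fin.mk_one,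
      Fin.reduceFinMk] <;> ring

theorem range_hkyRateMatrix : LinearMap.range hkyRateMatrix = hkySpan :=
  le_antisymm (by rintro _ ⟨v, rfl⟩; exact hkyRateMatrix_mem v)
    fun A hA => ⟨hkyRates A, hkyRateMatrix_hkyRates hA⟩

theorem finrank_hkySpan : Module.finrank ℝ hkySpan = 8 := by
  rw [← range_hkyRateMatrix, LinearMap.finrank_range_of_inj
    (Function.LeftInverse.injective hkyRates_hkyRateMatrix), Module.finrank_fin_fun]

theorem hky_span_lie_algebra :
    (∀ A B : Matrix (Fin 4) (Fin 4) ℝ,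
      (A 0 2 = A 0 3 ∧ A 1 2 = A 1 3 ∧ A 2 0 = A 2 1 ∧ A 3 0 = A 3 1 ∧
        ∀ j, ∑ i, A i j = 0) →
      (B 0 2 = B 0 3 ∧ B 1 2 = B 1 3 ∧ B 2 0 = B 2 1 ∧ B 3 0 = B 3 1 ∧
        ∀ j, ∑ i, B i j = 0) →
      ((A * B - B * A) 0 2 = (A * B - B * A) 0 3 ∧
        (A * B - B * A) 1 2 = (A * B - B * A) 1 3 ∧
        (A * B - B * A) 2 0 = (A * B - B * A) 2 1 ∧
        (A * B - B * A) 3 0 = (A * B - B * A) 3 1 ∧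
        ∀ j, ∑ i, (A * B - B * A) i j = 0)) ∧
    ∃ V : Submodule ℝ (Matrix (Fin 4) (Fin 4) ℝ),
      (V : Set (Matrix (Fin 4) (Fin 4) ℝ)) =
        {A | A 0 2 = A 0 3 ∧ A 1 2 = A 1 3 ∧ A 2 0 = A 2 1 ∧ A 3 0 = A 3 1 ∧
          ∀ j, ∑ i, A i j = 0} ∧
      Module.finrank ℝ V = 8 :=
  ⟨fun _ _ hA hB => commutator_mem_hkySpan hA hB, hkySpan, rfl, finrank_hkySpan⟩
end
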